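/- Let λ be an infinite cardinal and K a set of infinite cardinals such that every uniform ultrafilter over λ is μ-decomposable for some μ ∈ K. Let X be a topological space and 𝓕 a family of subsets of X. If X is 𝓕-D-compact for some ultrafilter D uniform over λ, then there exist μ ∈ K and an ultrafilter D' uniform over μ such that X is 𝓕-D'-compact. -/

import Mathlib

open Cardinal Set Topology

universe u v w

/-- `x` is a `D`-limit point of the family `Y`. -/
def IsDLimit {X : Type u} [TopologicalSpace X] {Z : Type v} (D : Ultrafilter Z)
    (Y : Z → Set X) (x : X) : Prop :=
  ∀ U ∈ nhds x, {z : Z | (Y z ∩ U).Nonempty} ∈ D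

/-- `X` is `𝓕`-`D`-compact: every `Z`-indexed family of members of `𝓕` has a `D`-limit point. -/
def FDCompact {X : Type u} [TopologicalSpace X] {Z : Type v} (F : Set (Set X))
    (D : Ultrafilter Z) : Prop :=
  ∀ Y : Z → Set X, (∀ z, Y z ∈ F) → ∃ x : X, IsDLimit D Y x

/-- `D` is `μ`-decomposable: some function to (the canonical set of size) `μ`
pushes `D` forward to a uniform ultrafilter over `μ`. -/
def Decomposable {Z : Type v} (D : Ultrafilter Z) (mu : Cardinal.{w}) : Prop :=
  ∃ f : Z → mu.ord.ToType, ∀ A ∈ Ultrafilter.map f D, #A = mu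

theorem IsDLimit.map {X : Type u} [TopologicalSpace X] {Z : Type v} {W : Type w}
    {D : Ultrafilter Z} {f : Z → W} {Y : W → Set X} {x : X} (h : IsDLimit D (Y ∘ f) x) :
    IsDLimit (D.map f) Y x :=
  h

theorem FDCompact.map {X : Type u} [TopologicalSpace X] {Z : Type v} {W : Type w}
    {F : Set (Set X)} {D : Ultrafilter Z} (h : FDCompact F D) (f : Z → W) :
    FDCompact F (D.map f) :=
  fun Y hY => (h (Y ∘ f) fun z => hY (f z)).imp fun _ => IsDLimit.map

theorem stmt16_general (lam : Cardinal.{u})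
    (K : Set Cardinal.{u})
    (hdec : ∀ D : Ultrafilter lam.ord.ToType, (∀ A ∈ D, #A = lam) →
      ∃ μ ∈ K, Decomposable D μ)
    {X : Type u} [TopologicalSpace X] (F : Set (Set X))
    (D : Ultrafilter lam.ord.ToType) (hD : ∀ A ∈ D, #A = lam) (h : FDCompact F D) :
    ∃ μ ∈ K, ∃ D' : Ultrafilter μ.ord.ToType, (∀ A ∈ D', #A = μ) ∧ FDCompact F D' := by
  obtain ⟨μ, hμK, f, hf⟩ := hdec D hD
  exact ⟨μ, hμK, D.map f, hf, h.map f⟩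

theorem stmt16 (lam : Cardinal.{u}) (hlam : Cardinal.aleph0 ≤ lam)
    (K : Set Cardinal.{u}) (hK : ∀ μ ∈ K, Cardinal.aleph0 ≤ μ)
    (hdec : ∀ D : Ultrafilter lam.ord.ToType, (∀ A ∈ D, #A = lam) →
      ∃ μ ∈ K, Decomposable D μ)
    {X : Type u} [TopologicalSpace X] (F : Set (Set X))
    (D : Ultrafilter lam.ord.ToType) (hD : ∀ A ∈ D, #A = lam) (h : FDCompact F D) :
    ∃ μ ∈ K, ∃ D' : Ultrafilter μ.ord.ToType, (∀ A ∈ D', #A = μ) ∧ FDCompact F D' :=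
  stmt16_general lam K hdec F D hD h
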